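/- For any swap Schelling game (G,b,Λ) on a δ-regular graph G with Λ < 1/δ, every swap equilibrium σ satisfies DoI(σ) ≥ 2b; consequently, for every swap equilibrium σ and every strategy profile σ*, DoI(σ*)/DoI(σ) ≤ min{(δ+1)/2, n/(2b)}. -/

import Mathlib

/-!
If no agent of a swap equilibrium is segregated, its degree of integration is `n ≥ 2b`.
Otherwise fix a segregated agent `v`. An agent `w` of the other color cannot have a neighbor of
its own color: `v` (utility `p 1 = 0`) and `w` would both gain by swapping, since `w` would end
up alone of its color among `δ + 1` nodes, which `Λ δ < 1` makes better than having `k ≥ 2`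
agents of its color there. Hence the other color class, of size at least `b`, and its
neighborhood are disjoint sets of non-segregated agents, and regularity makes the neighborhood
at least as large. For the ratio, every non-segregated agent is blue or adjacent to a blue
agent, so `DoI σ* ≤ min n (b (δ + 1))`.
-/

open Finset

namespace SwapSchelling

variable {V : Type*} [Fintype V] [DecidableEq V]

open scoped Classical in
/-- The closed neighborhood `N[v]` of a node `v` in `G`, as a `Finset`. -/
noncomputable def closedNbhd (G : SimpleGraph V) (v : V) : Finset V :=
  univ.filter (fun u => u = v ∨ G.Adj v u)

open scoped Classical in
/-- The degree `δ(v)` of a node `v` in `G`. -/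
noncomputable def deg (G : SimpleGraph V) (v : V) : ℕ :=
  (univ.filter (fun u => G.Adj v u)).card

/-- The maximum degree `Δ(G)`. -/
noncomputable def maxDeg (G : SimpleGraph V) : ℕ := univ.sup (deg G)

/-- The minimum degree `δ(G)`. -/
noncomputable def minDeg (G : SimpleGraph V) : ℕ := sInf (Set.range (deg G))

open scoped Classical in
/-- `frac G c v` is the fraction of nodes in the closed neighborhood of `v` that have
the same color as `v` (that is, `f_i(σ)` for the agent `i` occupying node `v`). -/
noncomputable def frac (G : SimpleGraph V) (c : V → Bool) (v : V) : ℝ :=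
  (((closedNbhd G v).filter (fun u => c u = c v)).card : ℝ) / ((closedNbhd G v).card : ℝ)

/-- The coloring obtained from `c` after the agents on nodes `v` and `w` swap positions. -/
def swapColor (c : V → Bool) (v w : V) : V → Bool := c ∘ Equiv.swap v w

/-- A single-peaked utility function `p` with peak at `Λ`: `p 0 = 0`, `p` is strictly
increasing on `[0,Λ]`, `p Λ = 1`, and `p x = p (Λ(1-x)/(1-Λ))` for `x ∈ [Λ,1]`. -/
structure IsSinglePeaked (p : ℝ → ℝ) (Λ : ℝ) : Prop where
  peak_mem : Λ ∈ Set.Ioo (0 : ℝ) 1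
  map_zero : p 0 = 0
  strictMonoOn : StrictMonoOn p (Set.Icc 0 Λ)
  map_peak : p Λ = 1
  symm : ∀ x ∈ Set.Icc Λ 1, p x = p (Λ * (1 - x) / (1 - Λ))

/-- A strategy profile: a 2-coloring of the nodes with exactly `b` blue (`true`) nodes. -/
def IsProfile (c : V → Bool) (b : ℕ) : Prop :=
  (univ.filter (fun v => c v = true)).card = b

/-- The structural data of a swap Schelling game `(G, b, Λ)` with utility function `p`:
`G` is connected, there are `b` blue agents with `1 ≤ b ≤ n/2`, and `p` is a
single-peaked utility function with peak `Λ`. -/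
structure IsGame (G : SimpleGraph V) (b : ℕ) (Λ : ℝ) (p : ℝ → ℝ) : Prop where
  connected : G.Connected
  one_le_b : 1 ≤ b
  b_le_half : 2 * b ≤ Fintype.card V
  singlePeaked : IsSinglePeaked p Λ

/-- The swap of the two (differently colored) agents occupying nodes `v` and `w`
is profitable: both agents strictly increase their utility. -/
def ProfitableSwap (G : SimpleGraph V) (p : ℝ → ℝ) (c : V → Bool) (v w : V) : Prop :=
  c v ≠ c w ∧
  p (frac G (swapColor c v w) w) > p (frac G c v) ∧
  p (frac G (swapColor c v w) v) > p (frac G c w)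

/-- A swap equilibrium: no profitable swap exists. -/
def IsSwapEquilibrium (G : SimpleGraph V) (p : ℝ → ℝ) (c : V → Bool) : Prop :=
  ∀ v w, ¬ ProfitableSwap G p c v w

open scoped Classical in
/-- The degree of integration: the number of non-segregated agents. -/
noncomputable def DoI (G : SimpleGraph V) (c : V → Bool) : ℕ :=
  (univ.filter (fun v => frac G c v ≠ 1)).card

open scoped Classical in
/-- The number of monochromatic edges of `G` under the coloring `c`. -/
noncomputable def Phi (G : SimpleGraph V) (c : V → Bool) : ℕ :=
  (G.edgeFinset.filter (fun e => ∀ u ∈ e, ∀ w ∈ e, c u = c w)).card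

open scoped Classical in
/-- The number of edges of `G`. -/
noncomputable def numEdges (G : SimpleGraph V) : ℕ :=
  (univ.filter (fun e : Sym2 V => e ∈ G.edgeSet)).card

/-- A finset of nodes is an independent set of `G`. -/
def IsIndepSet (G : SimpleGraph V) (s : Finset V) : Prop :=
  ∀ u ∈ s, ∀ w ∈ s, ¬ G.Adj u w

open scoped Classical in
/-- The independence number `α(G)`. -/
noncomputable def indepNum (G : SimpleGraph V) : ℕ :=
  univ.sup (fun s : Finset V => if IsIndepSet G s then s.card else 0)

open scoped Classical in
/-- The degree of `v` inside the subgraph of `G` induced by the node set `s`. -/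
noncomputable def degOn (G : SimpleGraph V) (s : Finset V) (v : V) : ℕ :=
  (s.filter (fun u => G.Adj v u)).card

/-- The point of `[0, Λ]` at which a single-peaked utility with peak `Λ` takes the same value
as at `x ∈ [0, 1]`. -/
noncomputable def peakFold (Λ x : ℝ) : ℝ := min x (Λ * (1 - x) / (1 - Λ))

lemma peakFold_mem_Icc {Λ x : ℝ} (hΛ : Λ ∈ Set.Ioo 0 1) (hx : x ∈ Set.Icc 0 1) :
    peakFold Λ x ∈ Set.Icc 0 Λ := by
  obtain ⟨hΛ0, hΛ1⟩ := hΛ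
  obtain ⟨hx0, hx1⟩ := hx
  refine ⟨le_min hx0 (div_nonneg (by nlinarith) (by linarith)), ?_⟩
  rcases le_total x Λ with h | h
  · exact (min_le_left _ _).trans h
  · refine (min_le_right _ _).trans ?_
    rw [div_le_iff₀ (by linarith)]
    nlinarith

namespace IsSinglePeaked

variable {p : ℝ → ℝ} {Λ : ℝ}

lemma apply_peakFold (hp : IsSinglePeaked p Λ) {x : ℝ} (hx : x ∈ Set.Icc 0 1) :
    p (peakFold Λ x) = p x := by
  obtain ⟨hΛ0, hΛ1⟩ := hp.peak_mem
  have h1Λ : 0 < 1 - Λ := by linarith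
  rcases le_total x Λ with h | h
  · rw [peakFold, min_eq_left]
    rw [le_div_iff₀ h1Λ]
    nlinarith
  · rw [peakFold, min_eq_right, hp.symm x ⟨h, hx.2⟩]
    rw [div_le_iff₀ h1Λ]
    nlinarith

lemma apply_lt_apply_iff (hp : IsSinglePeaked p Λ) {x y : ℝ} (hx : x ∈ Set.Icc 0 1)
    (hy : y ∈ Set.Icc 0 1) : p x < p y ↔ peakFold Λ x < peakFold Λ y := by
  rw [← hp.apply_peakFold hx, ← hp.apply_peakFold hy]
  exact hp.strictMonoOn.lt_iff_lt (peakFold_mem_Icc hp.peak_mem hx)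
    (peakFold_mem_Icc hp.peak_mem hy)

lemma apply_one_lt_apply (hp : IsSinglePeaked p Λ) {x : ℝ} (hx0 : 0 < x) (hx1 : x < 1) :
    p 1 < p x := by
  obtain ⟨hΛ0, hΛ1⟩ := hp.peak_mem
  rw [hp.apply_lt_apply_iff ⟨zero_le_one, le_rfl⟩ ⟨hx0.le, hx1.le⟩, peakFold, peakFold]
  simpa using lt_min hx0 (div_pos (mul_pos hΛ0 (by linarith)) (by linarith))

lemma apply_div_lt_apply_one_div (hp : IsSinglePeaked p Λ) {d k : ℝ} (hΛd : Λ * d < 1)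
    (hk : 2 ≤ k) (hkd : k ≤ d + 1) : p (k / (d + 1)) < p (1 / (d + 1)) := by
  obtain ⟨hΛ0, hΛ1⟩ := hp.peak_mem
  have hd : 0 < d + 1 := by linarith
  have h1Λ : 0 < 1 - Λ := by linarith
  rw [hp.apply_lt_apply_iff ⟨by positivity, (div_le_one hd).2 hkd⟩
    ⟨by positivity, (div_le_one hd).2 (by linarith)⟩, peakFold, peakFold]
  refine (min_le_right _ _).trans_lt (lt_min ?_ ?_)
  · rw [div_lt_div_iff₀ h1Λ hd]
    field_simp
    nlinarith
  · gcongr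
    linarith

end IsSinglePeaked

section Graph

open scoped Classical

variable {G : SimpleGraph V} {c : V → Bool} {u v w : V}

lemma mem_closedNbhd : u ∈ closedNbhd G v ↔ u = v ∨ G.Adj v u := by
  simp [closedNbhd]

lemma card_closedNbhd (G : SimpleGraph V) (v : V) : #(closedNbhd G v) = deg G v + 1 := by
  have h : closedNbhd G v = insert v (univ.filter (G.Adj v)) := by
    ext u
    simp [closedNbhd]
  rw [h, card_insert_of_notMem (by simp), deg]

lemma frac_eq_div (G : SimpleGraph V) (c : V → Bool) (v : V) :
    frac G c v = #((closedNbhd G v).filter (fun u => c u = c v)) / ((deg G v : ℝ) + 1) := by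
  rw [frac, card_closedNbhd, Nat.cast_succ]

lemma frac_pos (G : SimpleGraph V) (c : V → Bool) (v : V) : 0 < frac G c v := by
  have hv : v ∈ (closedNbhd G v).filter (fun u => c u = c v) :=
    mem_filter.2 ⟨mem_closedNbhd.2 (Or.inl rfl), rfl⟩
  have hcard := card_pos.2 ⟨v, hv⟩
  rw [frac_eq_div]
  positivity

lemma frac_eq_one_iff : frac G c v = 1 ↔ ∀ u, G.Adj v u → c u = c v := by
  rw [frac, div_eq_one_iff_eq (by rw [card_closedNbhd]; positivity), Nat.cast_inj,
    card_filter_eq_iff]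
  simp only [mem_closedNbhd, forall_eq_or_imp, true_and]

lemma frac_le_one (G : SimpleGraph V) (c : V → Bool) (v : V) : frac G c v ≤ 1 := by
  rw [frac, div_le_one (by rw [card_closedNbhd]; positivity), Nat.cast_le]
  exact card_filter_le _ _

lemma frac_lt_one_iff : frac G c v < 1 ↔ ∃ u, G.Adj v u ∧ c u ≠ c v := by
  rw [(frac_le_one G c v).lt_iff_ne, Ne, frac_eq_one_iff]
  push Not
  rfl

omit [Fintype V] in
@[simp] lemma swapColor_apply_left : swapColor c v w v = c w := by
  simp [swapColor]

omit [Fintype V] in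
@[simp] lemma swapColor_apply_right : swapColor c v w w = c v := by
  simp [swapColor]

omit [Fintype V] in
lemma swapColor_apply_of_ne (hv : u ≠ v) (hw : u ≠ w) : swapColor c v w u = c u := by
  simp [swapColor, Equiv.swap_apply_of_ne_of_ne hv hw]

lemma frac_swapColor_of_frac_eq_one (hv : frac G c v = 1) (hvw : ¬ G.Adj v w)
    (hc : c v ≠ c w) : frac G (swapColor c v w) v = 1 / ((deg G v : ℝ) + 1) := by
  have halone :
      (closedNbhd G v).filter (fun u => swapColor c v w u = swapColor c v w v) = {v} := by
    ext u
    simp only [mem_filter, mem_closedNbhd, mem_singleton, swapColor_apply_left]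
    refine ⟨?_, fun hu => ⟨Or.inl hu, by rw [hu, swapColor_apply_left]⟩⟩
    rintro ⟨rfl | hu, hcu⟩
    · rfl
    · rw [swapColor_apply_of_ne (G.ne_of_adj hu).symm (by rintro rfl; exact hvw hu),
        frac_eq_one_iff.1 hv u hu] at hcu
      exact absurd hcu hc
  rw [frac_eq_div, halone, card_singleton, Nat.cast_one]

lemma frac_swapColor_lt_one (hvw : ¬ G.Adj v w) (hc : c v ≠ c w) (hu : G.Adj w u)
    (hcu : c u = c w) : frac G (swapColor c v w) w < 1 := by
  refine frac_lt_one_iff.2 ⟨u, hu, ?_⟩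
  rw [swapColor_apply_of_ne (by rintro rfl; exact hvw hu.symm) (G.ne_of_adj hu).symm,
    swapColor_apply_right, hcu]
  exact hc.symm

lemma two_le_card_filter_closedNbhd (hu : G.Adj w u) (hcu : c u = c w) :
    2 ≤ #((closedNbhd G w).filter (fun x => c x = c w)) := by
  rw [← card_pair (G.ne_of_adj hu)]
  refine card_le_card fun x hx => ?_
  rcases mem_insert.1 hx with rfl | hx
  · exact mem_filter.2 ⟨mem_closedNbhd.2 (Or.inl rfl), rfl⟩
  · rw [mem_singleton.1 hx]
    exact mem_filter.2 ⟨mem_closedNbhd.2 (Or.inr hu), hcu⟩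

lemma IsSwapEquilibrium.color_eq_of_adj_of_frac_eq_one {p : ℝ → ℝ} {Λ : ℝ} {δ : ℕ}
    (hse : IsSwapEquilibrium G p c) (hp : IsSinglePeaked p Λ) (hreg : ∀ v, deg G v = δ)
    (hΛδ : Λ * δ < 1) (hv : frac G c v = 1) (hw : c w ≠ c v) (hu : G.Adj w u) :
    c u = c v := by
  by_contra hcu
  have hcuw : c u = c w := by
    revert hcu hw; cases c u <;> cases c v <;> cases c w <;> decide
  have hvw : ¬ G.Adj v w := fun h => hw (frac_eq_one_iff.1 hv w h)
  refine hse v w ⟨hw.symm, ?_, ?_⟩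
  · rw [hv]
    exact hp.apply_one_lt_apply (frac_pos _ _ _) (frac_swapColor_lt_one hvw hw.symm hu hcuw)
  · rw [frac_swapColor_of_frac_eq_one hv hvw hw.symm, frac_eq_div, hreg, hreg]
    have hle := (card_filter_le (closedNbhd G w) (fun x => c x = c w)).trans
      (card_closedNbhd G w).le
    rw [hreg] at hle
    exact hp.apply_div_lt_apply_one_div hΛδ
      (by exact_mod_cast two_le_card_filter_closedNbhd hu hcuw) (by exact_mod_cast hle)

omit [DecidableEq V] in
lemma exists_adj_of_deg_pos (h : 0 < deg G v) : ∃ u, G.Adj v u := by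
  obtain ⟨u, hu⟩ := card_pos.1 h
  exact ⟨u, (mem_filter.1 hu).2⟩

omit [DecidableEq V] in
lemma card_le_card_of_adj_mem {δ : ℕ} (hreg : ∀ v, deg G v = δ) (hδ : 0 < δ)
    {S T : Finset V} (h : ∀ w ∈ S, ∀ u, G.Adj w u → u ∈ T) : #S ≤ #T := by
  refine Nat.le_of_mul_le_mul_right (card_mul_le_card_mul G.Adj (fun w hw => ?_)
    (fun u _ => ?_)) hδ
  · rw [← hreg w, deg]
    exact card_le_card fun u hu =>
      mem_filter.2 ⟨h w hw u (mem_filter.1 hu).2, (mem_filter.1 hu).2⟩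
  · rw [← hreg u, deg]
    exact card_le_card fun w hw => mem_filter.2 ⟨mem_univ w, (mem_filter.1 hw).2.symm⟩

lemma two_mul_card_le_DoI {δ : ℕ} (hreg : ∀ v, deg G v = δ) (hδ : 0 < δ) (x : Bool)
    (hx : ∀ w, c w ≠ x → ∀ u, G.Adj w u → c u = x) :
    2 * #(univ.filter (fun w => c w ≠ x)) ≤ DoI G c := by
  set S := univ.filter (fun w => c w ≠ x)
  set T := univ.filter (fun u => ∃ w ∈ S, G.Adj w u)
  have hST : #S ≤ #T :=
    card_le_card_of_adj_mem hreg hδ fun w hw u hu => mem_filter.2 ⟨mem_univ u, w, hw, hu⟩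
  have hdisj : Disjoint S T := by
    refine disjoint_left.2 fun u huS huT => (mem_filter.1 huS).2 ?_
    obtain ⟨w, hw, hwu⟩ := (mem_filter.1 huT).2
    exact hx w (mem_filter.1 hw).2 u hwu
  have hsub : S ∪ T ⊆ univ.filter (fun v => frac G c v ≠ 1) := by
    intro v hv
    refine mem_filter.2 ⟨mem_univ v, (frac_lt_one_iff.2 ?_).ne⟩
    rcases mem_union.1 hv with hvS | hvT
    · obtain ⟨u, hu⟩ := exists_adj_of_deg_pos ((hreg v).symm ▸ hδ)
      exact ⟨u, hu, by rw [hx v (mem_filter.1 hvS).2 u hu]; exact (mem_filter.1 hvS).2.symm⟩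
    · obtain ⟨w, hw, hwv⟩ := (mem_filter.1 hvT).2
      exact ⟨w, hwv.symm, by rw [hx w (mem_filter.1 hw).2 v hwv]; exact (mem_filter.1 hw).2⟩
  calc 2 * #S ≤ #S + #T := by omega
    _ = #(S ∪ T) := (card_union_of_disjoint hdisj).symm
    _ ≤ DoI G c := card_le_card hsub

end Graph

omit [DecidableEq V] in
lemma IsProfile.le_card_filter_ne {c : V → Bool} {b : ℕ} (hc : IsProfile c b)
    (hb : 2 * b ≤ Fintype.card V) (x : Bool) : b ≤ #(univ.filter (fun v => c v ≠ x)) := by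
  have hsplit := card_filter_add_card_filter_not (s := univ) (fun v => c v = true)
  rw [hc, card_univ] at hsplit
  cases x
  · simp only [ne_eq, Bool.not_eq_false]
    exact hc.ge
  · simp only [ne_eq]
    omega

section DegreeOfIntegration

open scoped Classical

variable {G : SimpleGraph V} {c : V → Bool} {b : ℕ}

lemma DoI_le_card (G : SimpleGraph V) (c : V → Bool) : DoI G c ≤ Fintype.card V :=
  card_filter_le _ _

lemma DoI_eq_card_of_forall_frac_ne_one (h : ∀ v, frac G c v ≠ 1) :
    DoI G c = Fintype.card V := by
  rw [DoI, filter_true_of_mem fun v _ => h v, card_univ]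

lemma DoI_le_mul {δ : ℕ} (hc : IsProfile c b) (hreg : ∀ v, deg G v = δ) :
    DoI G c ≤ b * (δ + 1) := by
  have hsub : univ.filter (fun v => frac G c v ≠ 1) ⊆
      (univ.filter (fun u => c u = true)).biUnion (closedNbhd G) := by
    intro v hv
    rw [mem_biUnion]
    cases hcv : c v
    · obtain ⟨u, hu, hcu⟩ :=
        frac_lt_one_iff.1 ((frac_le_one G c v).lt_of_ne (mem_filter.1 hv).2)
      rw [hcv, ne_eq, Bool.not_eq_false] at hcu
      exact ⟨u, mem_filter.2 ⟨mem_univ u, hcu⟩, mem_closedNbhd.2 (Or.inr hu.symm)⟩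
    · exact ⟨v, mem_filter.2 ⟨mem_univ v, hcv⟩, mem_closedNbhd.2 (Or.inl rfl)⟩
  calc DoI G c ≤ ∑ u ∈ univ.filter (fun u => c u = true), #(closedNbhd G u) :=
        (card_le_card hsub).trans card_biUnion_le
    _ = b * (δ + 1) := by
        simp only [card_closedNbhd, hreg, sum_const, smul_eq_mul]
        exact congrArg (· * (δ + 1)) hc

theorem IsSwapEquilibrium.two_mul_le_DoI {p : ℝ → ℝ} {Λ : ℝ} {δ : ℕ}
    (hse : IsSwapEquilibrium G p c) (hp : IsSinglePeaked p Λ) (hc : IsProfile c b)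
    (hb : 2 * b ≤ Fintype.card V) (hreg : ∀ v, deg G v = δ) (hδ : 0 < δ)
    (hΛδ : Λ * δ < 1) : 2 * b ≤ DoI G c := by
  by_cases hseg : ∃ v, frac G c v = 1
  · obtain ⟨v, hv⟩ := hseg
    calc 2 * b ≤ 2 * #(univ.filter (fun w => c w ≠ c v)) :=
          Nat.mul_le_mul_left 2 (hc.le_card_filter_ne hb (c v))
      _ ≤ DoI G c := two_mul_card_le_DoI hreg hδ (c v) fun w hw u hu =>
          hse.color_eq_of_adj_of_frac_eq_one hp hreg hΛδ hv hw hu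
  · push Not at hseg
    rw [DoI_eq_card_of_forall_frac_ne_one hseg]
    exact hb

end DegreeOfIntegration

/-- On a `δ`-regular graph with `Λ < 1/δ`, every swap equilibrium `σ`
satisfies `DoI(σ) ≥ 2b`; consequently, for every swap equilibrium `σ` and every
strategy profile `σ*`, `DoI(σ*)/DoI(σ) ≤ min {(δ+1)/2, n/(2b)}`. -/
theorem price_of_anarchy_regular_graphs
    {V : Type*} [Fintype V] [DecidableEq V] (G : SimpleGraph V) (b : ℕ) (Λ : ℝ) (p : ℝ → ℝ)
    (δ : ℕ) (hreg : ∀ v, deg G v = δ)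
    (hgame : IsGame G b Λ p) (hΛ : Λ < 1 / (δ : ℝ)) :
    (∀ c : V → Bool, IsProfile c b → IsSwapEquilibrium G p c → 2 * b ≤ DoI G c) ∧
    (∀ c cstar : V → Bool, IsProfile c b → IsProfile cstar b → IsSwapEquilibrium G p c →
        (DoI G cstar : ℝ) / (DoI G c : ℝ) ≤
          min (((δ : ℝ) + 1) / 2) ((Fintype.card V : ℝ) / (2 * (b : ℝ)))) := by
  have hΛ0 := hgame.singlePeaked.peak_mem.1
  have hδ : 0 < δ := Nat.pos_of_ne_zero fun h => by
    rw [h, Nat.cast_zero, div_zero] at hΛ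
    linarith
  have hΛδ : Λ * δ < 1 := (lt_div_iff₀ (by positivity)).1 hΛ
  have hlower : ∀ c, IsProfile c b → IsSwapEquilibrium G p c → 2 * b ≤ DoI G c :=
    fun c hc hse => hse.two_mul_le_DoI hgame.singlePeaked hc hgame.b_le_half hreg hδ hΛδ
  refine ⟨hlower, fun c cstar hc hcstar hse => ?_⟩
  have hb : (0 : ℝ) < b := by exact_mod_cast hgame.one_le_b
  have hD : (2 * b : ℝ) ≤ DoI G c := by exact_mod_cast hlower c hc hse
  refine le_min ?_ (div_le_div₀ (by positivity) (by exact_mod_cast DoI_le_card G cstar)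
    (by positivity) hD)
  calc (DoI G cstar : ℝ) / DoI G c ≤ (b * (δ + 1) : ℕ) / (2 * b) :=
        div_le_div₀ (by positivity) (by exact_mod_cast DoI_le_mul hcstar hreg) (by positivity) hD
    _ = (δ + 1) / 2 := by
        push_cast
        field_simp [hb.ne']

end SwapSchelling
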